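/- Each basic rule R_i (0 ≤ i ≤ 2^n − 2) preserves all densities: for every configuration α on N sites and every state j ∈ Fin n, c_j(R_i(α)) = c_j(α). Consequently the affinity rule A also preserves all densities: c_j(A(α)) = c_j(α) for all j. -/

import Mathlib

namespace DensityCA

/-- A configuration on `N` sites with `n` states: a one-dimensional chain
with periodic boundary conditions. -/
abbrev Config (n N : ℕ) := ZMod N → Fin n

/-- The CA map on `N`-site configurations induced by a local rule `f` of radius `r`:
`T_N(α)(j) = f(α(j−r), …, α(j+r))`, indices taken mod `N`. -/
def caStep (n r : ℕ) (f : (Fin (2*r+1) → Fin n) → Fin n) (N : ℕ)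
    (α : Config n N) : Config n N :=
  fun j => f (fun k => α (j + ((k : ℕ) : ZMod N) - ((r : ℕ) : ZMod N)))

/-- The constant configuration with every site in state `i`. -/
def constConfig (n N : ℕ) (i : Fin n) : Config n N := fun _ => i

/-- `c_i(α)`: the number of sites of `α` in state `i`. -/
def countState {n N : ℕ} (i : Fin n) (α : Config n N) : ℕ :=
  ((List.range N).filter (fun j => decide (α (j : ZMod N) = i))).length

/-- `α ∈ Ω_i`: state `i` occurs strictly more often than any other state. -/
def InOmega {n N : ℕ} (i : Fin n) (α : Config n N) : Prop :=
  ∀ j : Fin n, j ≠ i → countState j α < countState i α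

/-- The CA rule induced by `f` classifies `n`-ary density. -/
def Classifies (n r : ℕ) (f : (Fin (2*r+1) → Fin n) → Fin n) : Prop :=
  ∀ (N : ℕ), 1 ≤ N → ∀ (i : Fin n) (α : Config n N),
    InOmega i α → ∃ k : ℕ, (caStep n r f N)^[k] α = constConfig n N i

/-! Elementary blocks -/

/-- `p` is a break (descent) position: the EB containing `p` ends at `p`. -/
def isBreak {n N : ℕ} (α : Config n N) (p : ZMod N) : Prop := α (p + 1) ≤ α p

/-- The list of break positions `j ∈ {0,…,N−1}` (as natural numbers). -/
def breakList {n N : ℕ} (α : Config n N) : List ℕ :=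
  (List.range N).filter (fun j => decide (α ((j : ZMod N) + 1) ≤ α (j : ZMod N)))

/-- The total number of EBs of a configuration. -/
def numEBs {n N : ℕ} (α : Config n N) : ℕ := (breakList α).length

/-- Distance (number of forward steps) from `p` to the end of the EB containing `p`. -/
def blockEndIdx {n N : ℕ} (α : Config n N) (p : ZMod N) : ℕ :=
  ((List.range N).find? (fun (k : ℕ) =>
    decide (α (p + (k : ZMod N) + 1) ≤ α (p + (k : ZMod N))))).getD 0

/-- Distance (number of backward steps) from `p` to the start of the EB containing `p`. -/
def blockStartIdx {n N : ℕ} (α : Config n N) (p : ZMod N) : ℕ :=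
  ((List.range N).find? (fun (k : ℕ) =>
    decide (α (p - (k : ZMod N)) ≤ α (p - (k : ZMod N) - 1)))).getD 0

/-- The last site of the EB containing `p`. -/
def blockEnd {n N : ℕ} (α : Config n N) (p : ZMod N) : ZMod N :=
  p + ((blockEndIdx α p : ℕ) : ZMod N)

/-- The first site of the EB containing `p`. -/
def blockStart {n N : ℕ} (α : Config n N) (p : ZMod N) : ZMod N :=
  p - ((blockStartIdx α p : ℕ) : ZMod N)

/-- The length of the EB containing `p`. -/
def blockLen {n N : ℕ} (α : Config n N) (p : ZMod N) : ℕ :=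
  blockStartIdx α p + blockEndIdx α p + 1

/-- The (strictly increasing) sequence of states of the EB containing `p`. -/
def blockList {n N : ℕ} (α : Config n N) (p : ZMod N) : List (Fin n) :=
  (List.range (blockLen α p)).map (fun t => α (blockStart α p + (t : ZMod N)))

/-- The EB containing `p`, identified with its set of states. -/
def blockSet {n N : ℕ} (α : Config n N) (p : ZMod N) : Finset (Fin n) :=
  (blockList α p).toFinset

/-- The set of sites of the EB containing `p`. -/
def blockSites {n N : ℕ} (α : Config n N) (p : ZMod N) : Finset (ZMod N) :=
  ((List.range (blockLen α p)).map (fun t => blockStart α p + (t : ZMod N))).toFinset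

/-- `S` is a cyclic run of consecutive sites on which `α` is strictly increasing. -/
def IsIncRun {n N : ℕ} (α : Config n N) (S : Finset (ZMod N)) : Prop :=
  ∃ (p : ZMod N) (m : ℕ), 1 ≤ m ∧ m ≤ N ∧
    S = ((List.range m).map (fun t => p + (t : ZMod N))).toFinset ∧
    ∀ t : ℕ, t + 1 < m → α (p + (t : ZMod N)) < α (p + (t : ZMod N) + 1)

/-- `S` is a maximal strictly increasing cyclic run of sites. -/
def IsMaxIncRun {n N : ℕ} (α : Config n N) (S : Finset (ZMod N)) : Prop :=
  IsIncRun α S ∧ ∀ S' : Finset (ZMod N), IsIncRun α S' → S ⊆ S' → S' = S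

/-! The hlex order and interactions of EBs (identified with nonempty subsets of `Fin n`). -/

/-- The strictly increasing list of the states of an EB. -/
def sortedList {n : ℕ} (S : Finset (Fin n)) : List (Fin n) := S.sort (· ≤ ·)

/-- Lexicographic comparison of lists of states. -/
def lexLT {n : ℕ} : List (Fin n) → List (Fin n) → Bool
  | [], [] => false
  | [], _ :: _ => true
  | _ :: _, [] => false
  | a :: as, b :: bs => if a < b then true else if b < a then false else lexLT as bs

/-- hlex: first compare lengths, then compare the increasing state sequences
lexicographically (i.e. at the first index where they differ). -/
def hlexLTb {n : ℕ} (S T : Finset (Fin n)) : Bool :=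
  decide (S.card < T.card) ||
    (decide (S.card = T.card) && lexLT (sortedList S) (sortedList T))

def hlexLEb {n : ℕ} (S T : Finset (Fin n)) : Bool := hlexLTb S T || decide (S = T)

def HlexLE {n : ℕ} (S T : Finset (Fin n)) : Prop := hlexLEb S T = true

/-- Two adjacent EBs `C₁C₂` interact elastically if the greedy interaction
`I(C₁C₂) = D₁D₂` (with `D₁ = C₁ ∪ C₂`, `D₂ = C₁ ∩ C₂`) equals `C₁C₂` or `C₂C₁`
as sequences of states. -/
def Elastic {n : ℕ} (C1 C2 : Finset (Fin n)) : Prop :=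
  sortedList (C1 ∪ C2) ++ sortedList (C1 ∩ C2) = sortedList C1 ++ sortedList C2 ∨
  sortedList (C1 ∪ C2) ++ sortedList (C1 ∩ C2) = sortedList C2 ++ sortedList C1

/-- The `2^n − 1` possible EBs `B_0 <hlex B_1 <hlex ⋯ <hlex B_{2^n−2}`,
listed in increasing hlex order. -/
def allEBs (n : ℕ) : List (Finset (Fin n)) :=
  ((((List.finRange n).sublists.filter (fun l => !l.isEmpty)).map
      (fun l => l.toFinset)).mergeSort (fun S T => hlexLEb S T))

/-- `B_i`, the `i`-th EB in hlex order. -/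
def Bblock (n : ℕ) (i : ℕ) : Finset (Fin n) := (allEBs n).getD i ∅

/-- The greedy interaction `I(C₁C₂) = D₁D₂` on state sequences:
`D₁` is the increasing sequence of `C₁ ∪ C₂`, `D₂` that of `C₁ ∩ C₂`. -/
def interact {n : ℕ} (L1 L2 : List (Fin n)) : List (Fin n) :=
  ((L1 ++ L2).dedup.mergeSort (fun a b => decide (a ≤ b))) ++
    (L1.filter (fun a => decide (a ∈ L2)))

/-- The basic rule `R_i`: every EB equal to `B_i` undergoes the greedy interaction
with its forward neighbouring EB (provided the latter is not `B_i`), all such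
interactions taken in parallel; expressed sitewise. -/
def Rrule {n N : ℕ} (i : ℕ) (α : Config n N) : Config n N := fun p =>
  let Bi := sortedList (Bblock n i)
  let Lk := blockList α p                                -- the EB containing p
  let Lp := blockList α (blockStart α p - 1)             -- the previous EB
  let Ln := blockList α (blockEnd α p + 1)               -- the next EB
  let t := blockStartIdx α p                             -- offset of p in its EB
  if Lk = Bi then
    if Ln = Bi then α p else (interact Lk Ln).getD t (α p)
  else if Lp = Bi then (interact Lp Lk).getD (Lp.length + t) (α p)
  else α p

/-- `R_0 ∘ R_1 ∘ ⋯ ∘ R_m`. -/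
def chainRule {n N : ℕ} (m : ℕ) (α : Config n N) : Config n N :=
  (List.range (m+1)).foldr (fun i β => Rrule i β) α

/-- The affinity rule `A = R_0 ∘ (R_0∘R_1) ∘ (R_0∘R_1∘R_2) ∘ ⋯ ∘ (R_0∘⋯∘R_{2^n−2})`. -/
def Arule {n N : ℕ} (α : Config n N) : Config n N :=
  (List.range (2^n - 1)).foldr (fun m β => chainRule m β) α

/-- The propagation rule `P`: for consecutive EBs `C₁C₂C₃`, the sites of `C₂` are
unchanged unless one of `C₁, C₂, C₃` is a singleton EB `B_i` (`0 ≤ i < n`), in which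
case every site of `C₂` is set to the state of the hlex-least EB among `C₁, C₂, C₃`. -/
def Prule {n N : ℕ} (α : Config n N) : Config n N := fun p =>
  let S1 := blockSet α (blockStart α p - 1)
  let S2 := blockSet α p
  let S3 := blockSet α (blockEnd α p + 1)
  if S1.card = 1 ∨ S2.card = 1 ∨ S3.card = 1 then
    let m12 := if hlexLEb S1 S2 then S1 else S2
    let m := if hlexLEb m12 S3 then m12 else S3
    (sortedList m).headD (α p)
  else α p


/-! Auxiliary development for the proof. -/

section Aux
variable {n N : ℕ}

private lemma find?_range'_spec (P : ℕ → Bool) :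
    ∀ (m s : ℕ), (∃ k, k < m ∧ P (s + k) = true) →
      ∃ k, k < m ∧ (List.range' s m).find? P = some (s + k) ∧ P (s + k) = true ∧
        ∀ j, j < k → ¬ (P (s + j) = true) := by
  intro m
  induction m with
  | zero => exact fun s h => absurd h (by simp)
  | succ m ih =>
    intro s h
    rw [List.range'_succ]
    by_cases hs : P s = true
    · refine ⟨0, by omega, ?_, by simpa using hs, by omega⟩
      simp [List.find?_cons, hs]
    · obtain ⟨k, hk, hPk⟩ := h
      have hk0 : k ≠ 0 := by rintro rfl; exact hs (by simpa using hPk)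
      obtain ⟨k', hk', hfind, hP, hmin⟩ := ih (s + 1)
        ⟨k - 1, by omega, by rw [show s + 1 + (k - 1) = s + k by omega]; exact hPk⟩
      refine ⟨k' + 1, by omega, ?_, ?_, ?_⟩
      · rw [List.find?_cons]
        simp only [hs]
        rw [show s + (k' + 1) = s + 1 + k' by omega] at *
        exact hfind
      · rw [show s + (k' + 1) = s + 1 + k' by omega]; exact hP
      · intro j hj
        match j with
        | 0 => simpa using hs
        | j + 1 =>
          rw [show s + (j + 1) = s + 1 + j by omega]
          exact hmin j (by omega)

private lemma find?_range_getD_spec (P : ℕ → Bool) (h : ∃ k, k < N ∧ P k = true) :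
    (((List.range N).find? P).getD 0) < N ∧ P (((List.range N).find? P).getD 0) = true ∧
      ∀ j, j < (((List.range N).find? P).getD 0) → ¬ (P j = true) := by
  obtain ⟨k, hk, hfind, hP, hmin⟩ := find?_range'_spec P N 0 (by simpa using h)
  rw [List.range_eq_range', hfind]
  simp only [Option.getD_some, Nat.zero_add]
  rw [Nat.zero_add] at hP
  refine ⟨hk, hP, fun j hj => by simpa using hmin j hj⟩

variable (α : Config n N)

private lemma exists_break (hN : 0 < N) (p : ZMod N) :
    ∃ k, k < N ∧ α (p + (k : ZMod N) + 1) ≤ α (p + (k : ZMod N)) := by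
  by_contra h
  push_neg at h
  have key : ∀ k, k ≤ N → 0 < k → α p < α (p + (k : ZMod N)) := by
    intro k
    induction k with
    | zero => omega
    | succ k ih =>
      intro hk _
      have hstep : α (p + (k : ZMod N)) < α (p + (k : ZMod N) + 1) := h k (by omega)
      have hcast : ((k + 1 : ℕ) : ZMod N) = (k : ZMod N) + 1 := by push_cast; ring
      rw [hcast, ← add_assoc]
      rcases Nat.eq_zero_or_pos k with hk0 | hk0
      · subst hk0; simpa using hstep
      · exact lt_trans (ih (by omega) hk0) hstep
  have := key N le_rfl hN
  rw [ZMod.natCast_self, add_zero] at this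
  exact lt_irrefl _ this

private lemma exists_break_bwd (hN : 0 < N) (p : ZMod N) :
    ∃ k, k < N ∧ α (p - (k : ZMod N)) ≤ α (p - (k : ZMod N) - 1) := by
  obtain ⟨k, hk, hb⟩ := exists_break α hN p
  refine ⟨N - 1 - k, by omega, ?_⟩
  have hcast : ((N - 1 - k : ℕ) : ZMod N) = -(((k : ZMod N)) + 1) := by
    have hsum : (N - 1 - k) + (k + 1) = N := by omega
    have : ((N - 1 - k : ℕ) : ZMod N) + ((k + 1 : ℕ) : ZMod N) = ((N : ℕ) : ZMod N) := by
      rw [← Nat.cast_add, hsum]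
    rw [ZMod.natCast_self] at this
    push_cast at this ⊢
    linear_combination this
  rw [hcast]
  have h1 : p - -((k : ZMod N) + 1) = p + (k : ZMod N) + 1 := by ring
  have h2 : p - -((k : ZMod N) + 1) - 1 = p + (k : ZMod N) := by ring
  rw [h1]
  have h2' : p + (k : ZMod N) + 1 - 1 = p + (k : ZMod N) := by ring
  rw [h2']; exact hb


private lemma endIdx_spec (hN : 0 < N) (p : ZMod N) :
    blockEndIdx α p < N ∧
      α (p + (blockEndIdx α p : ZMod N) + 1) ≤ α (p + (blockEndIdx α p : ZMod N)) ∧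
      ∀ j, j < blockEndIdx α p → ¬ (α (p + (j : ZMod N) + 1) ≤ α (p + (j : ZMod N))) := by
  have h := find?_range_getD_spec (N := N)
    (fun k => decide (α (p + (k : ZMod N) + 1) ≤ α (p + (k : ZMod N))))
    (by obtain ⟨k, hk, hb⟩ := exists_break α hN p; exact ⟨k, hk, decide_eq_true hb⟩)
  obtain ⟨h1, h2, h3⟩ := h
  exact ⟨h1, of_decide_eq_true h2, fun j hj hle => h3 j hj (decide_eq_true hle)⟩

private lemma startIdx_spec (hN : 0 < N) (p : ZMod N) :
    blockStartIdx α p < N ∧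
      α (p - (blockStartIdx α p : ZMod N)) ≤ α (p - (blockStartIdx α p : ZMod N) - 1) ∧
      ∀ j, j < blockStartIdx α p → ¬ (α (p - (j : ZMod N)) ≤ α (p - (j : ZMod N) - 1)) := by
  have h := find?_range_getD_spec (N := N)
    (fun k => decide (α (p - (k : ZMod N)) ≤ α (p - (k : ZMod N) - 1)))
    (by obtain ⟨k, hk, hb⟩ := exists_break_bwd α hN p; exact ⟨k, hk, decide_eq_true hb⟩)
  obtain ⟨h1, h2, h3⟩ := h
  exact ⟨h1, of_decide_eq_true h2, fun j hj hle => h3 j hj (decide_eq_true hle)⟩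

private lemma endIdx_eq (hN : 0 < N) {p : ZMod N} {k : ℕ} (hk : k < N)
    (hb : α (p + (k : ZMod N) + 1) ≤ α (p + (k : ZMod N)))
    (hmin : ∀ j, j < k → ¬ (α (p + (j : ZMod N) + 1) ≤ α (p + (j : ZMod N)))) :
    blockEndIdx α p = k := by
  obtain ⟨h1, h2, h3⟩ := endIdx_spec α hN p
  rcases lt_trichotomy (blockEndIdx α p) k with h | h | h
  · exact absurd h2 (hmin _ h)
  · exact h
  · exact absurd hb (h3 _ h)

private lemma startIdx_eq (hN : 0 < N) {p : ZMod N} {k : ℕ} (hk : k < N)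
    (hb : α (p - (k : ZMod N)) ≤ α (p - (k : ZMod N) - 1))
    (hmin : ∀ j, j < k → ¬ (α (p - (j : ZMod N)) ≤ α (p - (j : ZMod N) - 1))) :
    blockStartIdx α p = k := by
  obtain ⟨h1, h2, h3⟩ := startIdx_spec α hN p
  rcases lt_trichotomy (blockStartIdx α p) k with h | h | h
  · exact absurd h2 (hmin _ h)
  · exact h
  · exact absurd hb (h3 _ h)

private lemma endIdx_of_break (hN : 0 < N) {p : ZMod N} (hb : α (p + 1) ≤ α p) :
    blockEndIdx α p = 0 := by
  apply endIdx_eq α hN hN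
  · simpa using hb
  · omega

private lemma startIdx_of_break (hN : 0 < N) {p : ZMod N} (hb : α (p + 1) ≤ α p) :
    blockStartIdx α (p + 1) = 0 := by
  apply startIdx_eq α hN hN
  · simpa using hb
  · omega

private lemma break_of_endIdx (hN : 0 < N) {p : ZMod N} (h : blockEndIdx α p = 0) :
    α (p + 1) ≤ α p := by
  have := (endIdx_spec α hN p).2.1
  rw [h] at this; simpa using this

private lemma break_of_startIdx (hN : 0 < N) {p : ZMod N} (h : blockStartIdx α p = 0) :
    α p ≤ α (p - 1) := by
  have := (startIdx_spec α hN p).2.1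
  rw [h] at this; simpa using this

private lemma endIdx_succ (hN : 0 < N) {p : ZMod N} (hb : ¬ α (p + 1) ≤ α p) :
    blockEndIdx α p = blockEndIdx α (p + 1) + 1 := by
  obtain ⟨h1, h2, h3⟩ := endIdx_spec α hN (p + 1)
  set e := blockEndIdx α (p + 1) with he
  apply endIdx_eq α hN
  · -- e + 1 < N
    by_contra hcon
    have heN : e = N - 1 := by omega
    obtain ⟨k, hk, hbk⟩ := exists_break α hN (p + 1)
    rcases Nat.lt_or_ge k (N - 1) with hk' | hk'
    · exact h3 k (by omega) hbk
    · have hkeq : k = N - 1 := by omega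
      subst hkeq
      have : p + 1 + ((N - 1 : ℕ) : ZMod N) = p := by
        have : ((N - 1 : ℕ) : ZMod N) + 1 = 0 := by
          rw [show ((1:ZMod N)) = ((1:ℕ) : ZMod N) by push_cast; ring, ← Nat.cast_add,
            show N - 1 + 1 = N by omega, ZMod.natCast_self]
        linear_combination this
      rw [show p + 1 + ((N - 1 : ℕ) : ZMod N) = p from this] at hbk
      exact hb hbk
  · have : p + ((e + 1 : ℕ) : ZMod N) = p + 1 + (e : ZMod N) := by push_cast; ring
    rw [this]; exact h2
  · intro j hj
    match j with
    | 0 => simpa using hb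
    | j + 1 =>
      have : p + ((j + 1 : ℕ) : ZMod N) = p + 1 + (j : ZMod N) := by push_cast; ring
      rw [this]
      exact h3 j (by omega)

private lemma startIdx_succ (hN : 0 < N) {p : ZMod N} (hb : ¬ α (p + 1) ≤ α p) :
    blockStartIdx α (p + 1) = blockStartIdx α p + 1 := by
  obtain ⟨h1, h2, h3⟩ := startIdx_spec α hN p
  set s := blockStartIdx α p with hs
  apply startIdx_eq α hN
  · -- s + 1 < N
    by_contra hcon
    have hsN : s = N - 1 := by omega
    obtain ⟨k, hk, hbk⟩ := exists_break_bwd α hN p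
    rcases Nat.lt_or_ge k (N - 1) with hk' | hk'
    · exact h3 k (by omega) hbk
    · have hkeq : k = N - 1 := by omega
      subst hkeq
      have hc : p - ((N - 1 : ℕ) : ZMod N) = p + 1 := by
        have : ((N - 1 : ℕ) : ZMod N) + 1 = 0 := by
          rw [show ((1:ZMod N)) = ((1:ℕ) : ZMod N) by push_cast; ring, ← Nat.cast_add,
            show N - 1 + 1 = N by omega, ZMod.natCast_self]
        linear_combination -this
      rw [hc, show p + 1 - 1 = p by ring] at hbk
      exact hb hbk
  · have e1 : p + 1 - ((s + 1 : ℕ) : ZMod N) = p - (s : ZMod N) := by push_cast; ring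
    have e2 : p + 1 - ((s + 1 : ℕ) : ZMod N) - 1 = p - (s : ZMod N) - 1 := by push_cast; ring
    rw [e1]; exact h2
  · intro j hj
    match j with
    | 0 => simpa using hb
    | j + 1 =>
      have e1 : p + 1 - ((j + 1 : ℕ) : ZMod N) = p - (j : ZMod N) := by push_cast; ring
      have e2 : p + 1 - ((j + 1 : ℕ) : ZMod N) - 1 = p - (j : ZMod N) - 1 := by push_cast; ring
      rw [e1]
      exact h3 j (by omega)

private lemma flatMap_single {γ : Type*} {δ : Type*} (l : List γ) (f : γ → δ) :
    l.flatMap (fun a => pure (f a)) = l.map f := by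
  induction l with
  | nil => rfl
  | cons a l ih => rw [List.flatMap_cons, List.map_cons, ← ih]; rfl

private lemma blockList_eq (p : ZMod N) :
    blockList α p =
      (List.range (blockLen α p)).map (fun t : ℕ => α (blockStart α p + (t : ZMod N))) := by
  rw [blockList]
  show List.map _ (List.flatMap _ _) = _
  rw [flatMap_single, List.map_map]
  rfl

private lemma coh_fwd (hN : 0 < N) (p : ZMod N) :
    ∀ t, t ≤ blockEndIdx α p →
      blockStartIdx α (p + (t : ZMod N)) = blockStartIdx α p + t ∧
      blockEndIdx α (p + (t : ZMod N)) = blockEndIdx α p - t := by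
  intro t
  induction t with
  | zero => intro _; simp
  | succ t ih =>
    intro ht
    obtain ⟨ihs, ihe⟩ := ih (by omega)
    have hnb : ¬ α (p + (t : ZMod N) + 1) ≤ α (p + (t : ZMod N)) :=
      (endIdx_spec α hN p).2.2 t (by omega)
    have hcast : p + ((t + 1 : ℕ) : ZMod N) = p + (t : ZMod N) + 1 := by push_cast; ring
    constructor
    · rw [hcast, startIdx_succ α hN hnb, ihs]; omega
    · rw [hcast]
      have := endIdx_succ α hN hnb
      rw [ihe] at this
      omega

private lemma coh_bwd (hN : 0 < N) (p : ZMod N) :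
    ∀ t, t ≤ blockStartIdx α p →
      blockStartIdx α (p - (t : ZMod N)) = blockStartIdx α p - t ∧
      blockEndIdx α (p - (t : ZMod N)) = blockEndIdx α p + t := by
  intro t
  induction t with
  | zero => intro _; simp
  | succ t ih =>
    intro ht
    obtain ⟨ihs, ihe⟩ := ih (by omega)
    have hnb : ¬ α (p - (t : ZMod N)) ≤ α (p - (t : ZMod N) - 1) :=
      (startIdx_spec α hN p).2.2 t (by omega)
    have hnb' : ¬ α ((p - (t : ZMod N) - 1) + 1) ≤ α (p - (t : ZMod N) - 1) := by
      rw [show p - (t : ZMod N) - 1 + 1 = p - (t : ZMod N) by ring]; exact hnb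
    have hcast : p - ((t + 1 : ℕ) : ZMod N) = p - (t : ZMod N) - 1 := by push_cast; ring
    have hs' := startIdx_succ α hN hnb'
    have he' := endIdx_succ α hN hnb'
    rw [show p - (t : ZMod N) - 1 + 1 = p - (t : ZMod N) by ring] at hs' he'
    rw [ihs] at hs'
    rw [ihe] at he'
    exact ⟨by rw [hcast]; omega, by rw [hcast]; omega⟩

/-- Master coherence: facts about the site `blockStart α p + t` for `t < blockLen α p`. -/
private lemma block_site (hN : 0 < N) (p : ZMod N) (t : ℕ) (ht : t < blockLen α p) :
    blockStartIdx α (blockStart α p + (t : ZMod N)) = t ∧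
    blockEndIdx α (blockStart α p + (t : ZMod N)) = blockLen α p - 1 - t ∧
    blockStart α (blockStart α p + (t : ZMod N)) = blockStart α p ∧
    blockEnd α (blockStart α p + (t : ZMod N)) = blockEnd α p ∧
    blockLen α (blockStart α p + (t : ZMod N)) = blockLen α p ∧
    blockList α (blockStart α p + (t : ZMod N)) = blockList α p := by
  have hq0 := coh_bwd α hN p (blockStartIdx α p) le_rfl
  rw [Nat.sub_self] at hq0
  set q0 := blockStart α p with hq0def
  have hq0' : q0 = p - ((blockStartIdx α p : ℕ) : ZMod N) := rfl
  rw [← hq0'] at hq0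
  have hL : blockLen α p = blockStartIdx α p + blockEndIdx α p + 1 := rfl
  obtain ⟨hfs, hfe⟩ := coh_fwd α hN q0 t (by omega)
  rw [hq0.1] at hfs
  rw [hq0.2] at hfe
  have h1 : blockStartIdx α (q0 + (t : ZMod N)) = t := by omega
  have h2 : blockEndIdx α (q0 + (t : ZMod N)) = blockLen α p - 1 - t := by omega
  have h3 : blockStart α (q0 + (t : ZMod N)) = q0 := by
    rw [blockStart, h1]; ring
  have hLen : blockLen α (q0 + (t : ZMod N)) = blockLen α p := by
    rw [blockLen, h1, h2]; omega
  have hpq0 : p = q0 + ((blockStartIdx α p : ℕ) : ZMod N) := by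
    rw [hq0']; ring
  have h4 : blockEnd α (q0 + (t : ZMod N)) = blockEnd α p := by
    rw [blockEnd, blockEnd, h2]
    have hsum : ((t : ZMod N)) + ((blockLen α p - 1 - t : ℕ) : ZMod N)
        = ((blockStartIdx α p : ℕ) : ZMod N) + ((blockEndIdx α p : ℕ) : ZMod N) := by
      rw [← Nat.cast_add, ← Nat.cast_add]
      congr 1
      omega
    rw [add_assoc, hsum]
    linear_combination -hpq0
  have h5 : blockList α (q0 + (t : ZMod N)) = blockList α p := by
    rw [blockList_eq, blockList_eq, h3, hLen, ← hq0def]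
  exact ⟨h1, h2, h3, h4, hLen, h5⟩

private lemma blockLen_le (hN : 0 < N) (p : ZMod N) : blockLen α p ≤ N := by
  obtain ⟨h1, _, _, _, hLen, _⟩ := block_site α hN p 0 (by rw [blockLen]; omega)
  simp only [Nat.cast_zero, add_zero] at h1 hLen
  have := (endIdx_spec α hN (blockStart α p)).1
  have hL : blockLen α (blockStart α p)
      = blockStartIdx α (blockStart α p) + blockEndIdx α (blockStart α p) + 1 := rfl
  omega

private lemma blockList_length (p : ZMod N) : (blockList α p).length = blockLen α p := by
  rw [blockList_eq, List.length_map, List.length_range]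

private lemma cast_inj_lt (hN : 0 < N) {a b : ℕ} (ha : a < N) (hb : b < N)
    (h : (a : ZMod N) = b) : a = b := by
  haveI : NeZero N := ⟨hN.ne'⟩
  have := congrArg ZMod.val h
  rwa [ZMod.val_natCast_of_lt ha, ZMod.val_natCast_of_lt hb] at this

/-- Strict increase within a block starting at `q`. -/
private lemma block_inc (hN : 0 < N) {q : ZMod N} (hq : blockStartIdx α q = 0) :
    ∀ b a, a < b → b < blockLen α q → α (q + (a : ZMod N)) < α (q + (b : ZMod N)) := by
  have hL : blockLen α q = blockEndIdx α q + 1 := by rw [blockLen, hq]; omega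
  intro b
  induction b with
  | zero => omega
  | succ b ih =>
    intro a ha hb
    have hstep : α (q + (b : ZMod N)) < α (q + (b : ZMod N) + 1) := by
      have := (endIdx_spec α hN q).2.2 b (by omega)
      exact lt_of_not_ge this
    have hcast : ((b + 1 : ℕ) : ZMod N) = (b : ZMod N) + 1 := by push_cast; ring
    rw [hcast, ← add_assoc]
    rcases Nat.lt_or_ge a b with h | h
    · exact lt_trans (ih a h (by omega)) hstep
    · have : a = b := by omega
      subst this; exact hstep

private lemma blockList_nodup (hN : 0 < N) (p : ZMod N) : (blockList α p).Nodup := by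
  obtain ⟨h1, _, _, _, hLen, hList⟩ := block_site α hN p 0 (by rw [blockLen]; omega)
  simp only [Nat.cast_zero, add_zero] at h1 hLen hList
  have hbs : blockStart α (blockStart α p) = blockStart α p := by
    rw [blockStart, h1]; simp
  rw [← hList, blockList_eq, hbs, hLen]
  apply List.Nodup.map_on _ List.nodup_range
  intro x hx y hy hxy
  simp only [List.mem_range] at hx hy
  by_contra hne
  rcases Nat.lt_or_ge x y with h | h
  · exact absurd hxy (ne_of_lt (block_inc α hN h1 y x h (by omega)))
  · have h' : y < x := by omega
    exact absurd hxy.symm (ne_of_lt (block_inc α hN h1 x y h' (by omega)))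

private lemma blockSites_nodup (hN : 0 < N) (q : ZMod N) :
    ((List.range (blockLen α q)).map (fun t : ℕ => q + (t : ZMod N))).Nodup := by
  apply List.Nodup.map_on _ List.nodup_range
  intro x hx y hy hxy
  simp only [List.mem_range] at hx hy
  have hb := blockLen_le α hN q
  exact cast_inj_lt hN (by omega) (by omega) (add_left_cancel hxy)

private lemma map_range_getD {γ : Type*} (l : List γ) (d : ℕ → γ) :
    ∀ m, m ≤ l.length → (List.range m).map (fun t => l.getD t (d t)) = l.take m := by
  intro m
  induction m with
  | zero => intro _; simp
  | succ m ih =>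
    intro hm
    rw [List.range_succ, List.map_append, ih (by omega), List.take_succ]
    simp only [List.map_cons, List.map_nil]
    congr 1
    have hlt : m < l.length := by omega
    rw [List.getD_eq_getElem?_getD, List.getElem?_eq_getElem hlt]
    simp

private lemma map_range_getD_add {γ : Type*} (l : List γ) (d : ℕ → γ) (a m : ℕ)
    (h : a + m ≤ l.length) :
    (List.range m).map (fun t => l.getD (a + t) (d t)) = (l.drop a).take m := by
  rw [← map_range_getD (l.drop a) d m (by rw [List.length_drop]; omega)]
  apply List.map_congr_left
  intro t _
  rw [List.getD_eq_getElem?_getD, List.getD_eq_getElem?_getD, List.getElem?_drop]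

private lemma interact_multiset {n : ℕ} (L1 L2 : List (Fin n))
    (h1 : L1.Nodup) (h2 : L2.Nodup) :
    (↑(interact L1 L2) : Multiset (Fin n)) = ↑L1 + ↑L2 := by
  ext x
  rw [interact]
  rw [show ((↑((((L1 ++ L2).dedup.mergeSort fun a b => decide (a ≤ b))) ++
      (L1.filter fun a => decide (a ∈ L2))) : Multiset (Fin n)) =
      (↑((L1 ++ L2).dedup.mergeSort fun a b => decide (a ≤ b)) : Multiset (Fin n)) +
      ↑(L1.filter fun a => decide (a ∈ L2)) ) from by
    rw [← Multiset.coe_add]]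
  have hperm : ((L1 ++ L2).dedup.mergeSort fun a b => decide (a ≤ b)).Perm (L1 ++ L2).dedup :=
    List.mergeSort_perm _ _
  rw [Multiset.count_add, Multiset.count_add, Multiset.coe_count, Multiset.coe_count,
    Multiset.coe_count, Multiset.coe_count, hperm.count_eq, List.count_dedup]
  have hfil : List.count x (L1.filter fun a => decide (a ∈ L2)) =
      if x ∈ L2 then List.count x L1 else 0 := by
    rcases Classical.em (x ∈ L2) with h | h
    · rw [if_pos h]
      exact List.count_filter (by simpa using h)
    · rw [if_neg h]
      rw [List.count_eq_zero]
      intro hmem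
      exact h (of_decide_eq_true (List.mem_filter.mp hmem).2)
  rw [hfil]
  have c1 : List.count x L1 = if x ∈ L1 then 1 else 0 := by
    rcases Classical.em (x ∈ L1) with h | h
    · rw [if_pos h, List.count_eq_one_of_mem h1 h]
    · rw [if_neg h, List.count_eq_zero_of_not_mem h]
  have c2 : List.count x L2 = if x ∈ L2 then 1 else 0 := by
    rcases Classical.em (x ∈ L2) with h | h
    · rw [if_pos h, List.count_eq_one_of_mem h2 h]
    · rw [if_neg h, List.count_eq_zero_of_not_mem h]
  rw [c1, c2]
  simp only [List.mem_append]
  rcases Classical.em (x ∈ L1) with hx1 | hx1 <;> rcases Classical.em (x ∈ L2) with hx2 | hx2 <;>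
    simp [hx1, hx2]

private lemma interact_length {n : ℕ} (L1 L2 : List (Fin n))
    (h1 : L1.Nodup) (h2 : L2.Nodup) :
    (interact L1 L2).length = L1.length + L2.length := by
  have := congrArg Multiset.card (interact_multiset L1 L2 h1 h2)
  simpa using this

private def blockM (α : Config n N) (q : ZMod N) : Multiset (ZMod N) :=
  ↑((List.range (blockLen α q)).map (fun t : ℕ => q + (t : ZMod N)))

private lemma startsF_aux (hN : 0 < N) (p : ZMod N) :
    blockStartIdx α (blockStart α p) = 0 := by
  have := (block_site α hN p 0 (by rw [blockLen]; omega)).1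
  simpa using this

/-- membership/count in a block's site multiset -/
private lemma count_blockM (hN : 0 < N) {q : ZMod N} (hq : blockStartIdx α q = 0)
    (p : ZMod N) :
    Multiset.count p (blockM α q) = if q = blockStart α p then 1 else 0 := by
  have hbsq : blockStart α q = q := by rw [blockStart, hq]; simp
  rcases Classical.em (q = blockStart α p) with h | h
  · rw [if_pos h]
    have hsp : blockStartIdx α p < blockLen α p := by rw [blockLen]; omega
    have hmem : p ∈ (List.range (blockLen α q)).map (fun t : ℕ => q + (t : ZMod N)) := by
      rw [List.mem_map]
      refine ⟨blockStartIdx α p, ?_, ?_⟩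
      · rw [List.mem_range]
        have hLq : blockLen α q = blockLen α p := by
          have := (block_site α hN p 0 (by rw [blockLen]; omega)).2.2.2.2.1
          simpa [← h] using this
        omega
      · rw [h, blockStart]; ring
    rw [blockM, Multiset.coe_count]
    exact List.count_eq_one_of_mem (blockSites_nodup α hN q) hmem
  · rw [if_neg h]
    rw [blockM, Multiset.coe_count, List.count_eq_zero]
    intro hmem
    rw [List.mem_map] at hmem
    obtain ⟨t, ht, hpt⟩ := hmem
    rw [List.mem_range] at ht
    apply h
    have := (block_site α hN q t ht).2.2.1
    rw [hbsq] at this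
    rw [← hpt, this]

private lemma partition_multiset (hN : 0 < N) :
    (↑((List.range N).map (fun t : ℕ => (t : ZMod N))) : Multiset (ZMod N)) =
      ∑ q ∈ Finset.filter (fun q => blockStartIdx α q = 0)
          (@Finset.univ (ZMod N) (@ZMod.fintype N ⟨hN.ne'⟩)),
        blockM α q := by
  haveI : NeZero N := ⟨hN.ne'⟩
  ext p
  rw [Multiset.count_sum']
  have hterm : ∀ q ∈ Finset.filter (fun q => blockStartIdx α q = 0) Finset.univ,
      Multiset.count p (blockM α q) = if q = blockStart α p then 1 else 0 := by
    intro q hq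
    rw [Finset.mem_filter] at hq
    exact count_blockM α hN hq.2 p
  rw [Finset.sum_congr rfl hterm, Finset.sum_ite_eq' _ (blockStart α p) (fun _ => 1)]
  rw [if_pos (by rw [Finset.mem_filter]; exact ⟨Finset.mem_univ _, startsF_aux α hN p⟩)]
  rw [Multiset.coe_count]
  apply List.count_eq_one_of_mem
  · apply List.Nodup.map_on _ List.nodup_range
    intro x hx y hy hxy
    simp only [List.mem_range] at hx hy
    exact cast_inj_lt hN hx hy hxy
  · rw [List.mem_map]
    exact ⟨p.val, by rw [List.mem_range]; exact ZMod.val_lt p, by simp [ZMod.natCast_val,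
      ZMod.cast_id]⟩

private lemma countState_eq_count (β : Config n N) (j : Fin n) :
    countState j β =
      Multiset.count j (Multiset.map β ↑((List.range N).map (fun t : ℕ => (t : ZMod N)))) := by
  rw [Multiset.map_coe, Multiset.coe_count, countState, List.count, List.map_map,
    List.countP_map, ← List.countP_eq_length_filter]
  show List.countP _ (List.flatMap _ _) = _
  rw [flatMap_single, List.countP_map]
  apply List.countP_congr
  intro x _
  simp only [Function.comp_apply]
  rw [Bool.eq_iff_iff]
  simp

private lemma Rrule_site (hN : 0 < N) (i : ℕ) {q : ZMod N} (hq : blockStartIdx α q = 0)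
    {t : ℕ} (ht : t < blockLen α q) :
    Rrule i α (q + (t : ZMod N)) =
      (if blockList α q = sortedList (Bblock n i) then
        (if blockList α (blockEnd α q + 1) = sortedList (Bblock n i) then α (q + (t : ZMod N))
         else (interact (blockList α q) (blockList α (blockEnd α q + 1))).getD t
            (α (q + (t : ZMod N))))
      else if blockList α (q - 1) = sortedList (Bblock n i) then
        (interact (blockList α (q - 1)) (blockList α q)).getD
          ((blockList α (q - 1)).length + t) (α (q + (t : ZMod N)))
      else α (q + (t : ZMod N))) := by
  have hbsq : blockStart α q = q := by rw [blockStart, hq]; simp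
  have hbs := block_site α hN q t ht
  rw [hbsq] at hbs
  obtain ⟨h1, h2, h3, h4, h5, h6⟩ := hbs
  simp only [Rrule]
  rw [h6, h3, h4, h1]

private lemma base_facts (hN : 0 < N) (p : ZMod N) :
    blockStartIdx α (blockStart α p) = 0 ∧ blockList α (blockStart α p) = blockList α p ∧
      blockEnd α (blockStart α p) = blockEnd α p := by
  have := block_site α hN p 0 (by rw [blockLen]; omega)
  simp only [Nat.cast_zero, add_zero] at this
  exact ⟨this.1, this.2.2.2.2.2, this.2.2.2.1⟩

private lemma end_facts (hN : 0 < N) {q : ZMod N} (hq : blockStartIdx α q = 0) :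
    blockStartIdx α (blockEnd α q + 1) = 0 ∧ blockList α (blockEnd α q) = blockList α q ∧
      blockStart α (blockEnd α q) = q := by
  have hbsq : blockStart α q = q := by rw [blockStart, hq]; simp
  have hL : blockLen α q = blockEndIdx α q + 1 := by rw [blockLen, hq]; omega
  have hbe : blockEnd α q = q + ((blockEndIdx α q : ℕ) : ZMod N) := rfl
  have hbs := block_site α hN q (blockEndIdx α q) (by omega)
  rw [hbsq] at hbs
  obtain ⟨h1, h2, h3, h4, h5, h6⟩ := hbs
  have hbrk : α ((q + ((blockEndIdx α q : ℕ) : ZMod N)) + 1)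
      ≤ α (q + ((blockEndIdx α q : ℕ) : ZMod N)) := by
    apply break_of_endIdx α hN
    rw [h2]; omega
  constructor
  · rw [hbe]; exact startIdx_of_break α hN hbrk
  · rw [hbe]; exact ⟨h6, h3⟩

private lemma prev_facts (hN : 0 < N) {r : ZMod N} (hr : blockStartIdx α r = 0) :
    blockEnd α (r - 1) = r - 1 := by
  have hbrk : α ((r - 1) + 1) ≤ α (r - 1) := by
    rw [sub_add_cancel]
    exact break_of_startIdx α hN hr
  rw [blockEnd, endIdx_of_break α hN hbrk]
  simp

private lemma map_block (β : Config n N) (q : ZMod N) :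
    Multiset.map β (blockM α q) =
      ↑((List.range (blockLen α q)).map (fun t : ℕ => β (q + (t : ZMod N)))) := by
  rw [blockM, Multiset.map_coe, List.map_map]
  rfl

private lemma map_block_alpha (hN : 0 < N) {q : ZMod N} (hq : blockStartIdx α q = 0) :
    Multiset.map α (blockM α q) = ↑(blockList α q) := by
  have hbsq : blockStart α q = q := by rw [blockStart, hq]; simp
  rw [map_block, blockList_eq, hbsq]

private lemma map_finsum (β : Config n N) (s : Finset (ZMod N)) (f : ZMod N → Multiset (ZMod N)) :
    Multiset.map β (∑ q ∈ s, f q) = ∑ q ∈ s, Multiset.map β (f q) := by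
  classical
  induction s using Finset.induction with
  | empty => simp
  | insert a s h ih => rw [Finset.sum_insert h, Finset.sum_insert h, Multiset.map_add, ih]

private lemma Rrule_preserves (hN : 0 < N) (i : ℕ) (j : Fin n) :
    countState j (Rrule i α) = countState j α := by
  haveI : NeZero N := ⟨hN.ne'⟩
  classical
  set β := Rrule i α with hβ
  rw [countState_eq_count, countState_eq_count]
  suffices h : Multiset.map β ↑((List.range N).map (fun t : ℕ => (t : ZMod N)))
      = Multiset.map α ↑((List.range N).map (fun t : ℕ => (t : ZMod N))) by rw [h]
  rw [partition_multiset α hN, map_finsum, map_finsum]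
  set BiL := sortedList (Bblock n i) with hBiL
  set S := Finset.filter (fun q => blockStartIdx α q = 0)
    (@Finset.univ (ZMod N) (@ZMod.fintype N ⟨hN.ne'⟩)) with hS
  have hSmem : ∀ q, q ∈ S ↔ blockStartIdx α q = 0 := by
    intro q; rw [hS, Finset.mem_filter]; simp
  set A := S.filter (fun q => blockList α q = BiL ∧ blockList α (blockEnd α q + 1) ≠ BiL)
    with hA
  set R := S.filter (fun q => blockList α q ≠ BiL ∧ blockList α (q - 1) = BiL) with hR
  have hAmem : ∀ q, q ∈ A ↔ (q ∈ S ∧ blockList α q = BiL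
      ∧ blockList α (blockEnd α q + 1) ≠ BiL) := by
    intro q; rw [hA, Finset.mem_filter]
  have hRmem : ∀ q, q ∈ R ↔ (q ∈ S ∧ blockList α q ≠ BiL ∧ blockList α (q - 1) = BiL) := by
    intro q; rw [hR, Finset.mem_filter]
  set F := fun q => Multiset.map β (blockM α q) with hF
  set G := fun q => Multiset.map α (blockM α q) with hG
  have hsub : A ∪ R ⊆ S := by
    intro q hq
    rw [Finset.mem_union] at hq
    rcases hq with h | h
    · exact Finset.filter_subset _ _ h
    · exact Finset.filter_subset _ _ h
  have hdisj : Disjoint A R := by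
    rw [Finset.disjoint_left]
    intro q hqA hqR
    exact ((hRmem q).mp hqR).2.1 ((hAmem q).mp hqA).2.1
  -- unchanged blocks
  have hout : ∀ q ∈ S \ (A ∪ R), F q = G q := by
    intro q hq
    rw [Finset.mem_sdiff, Finset.mem_union] at hq
    obtain ⟨hqS, hqn⟩ := hq
    push_neg at hqn
    obtain ⟨hqnA, hqnR⟩ := hqn
    have hq0 : blockStartIdx α q = 0 := (hSmem q).mp hqS
    show Multiset.map β (blockM α q) = Multiset.map α (blockM α q)
    rw [map_block, map_block]
    congr 1
    apply List.map_congr_left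
    intro t ht
    rw [List.mem_range] at ht
    rw [hβ, Rrule_site α hN i hq0 ht]
    rcases Classical.em (blockList α q = BiL) with hk | hk
    · rw [if_pos hk]
      have hLn : blockList α (blockEnd α q + 1) = BiL := by
        by_contra hLn
        exact hqnA ((hAmem q).mpr ⟨hqS, hk, hLn⟩)
      rw [if_pos hLn]
    · rw [if_neg hk]
      have hLp : ¬ blockList α (q - 1) = BiL := by
        intro hLp
        exact hqnR ((hRmem q).mpr ⟨hqS, hk, hLp⟩)
      rw [if_neg hLp]
  -- the pairing
  have hpair : ∀ q ∈ A, F q + F (blockEnd α q + 1) = G q + G (blockEnd α q + 1) := by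
    intro q hqA
    obtain ⟨hqS, hk, hLn⟩ := (hAmem q).mp hqA
    have hq0 : blockStartIdx α q = 0 := (hSmem q).mp hqS
    obtain ⟨hr0, hprevList, hprevStart⟩ := end_facts α hN hq0
    set r := blockEnd α q + 1 with hrdef
    have hr1 : r - 1 = blockEnd α q := by rw [hrdef]; ring
    set I := interact (blockList α q) (blockList α r) with hI
    have hnod1 := blockList_nodup α hN q
    have hnod2 := blockList_nodup α hN r
    have hIlen : I.length = blockLen α q + blockLen α r := by
      rw [hI, interact_length _ _ hnod1 hnod2, blockList_length, blockList_length]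
    have hFq : F q = ↑(I.take (blockLen α q)) := by
      show Multiset.map β (blockM α q) = _
      rw [map_block]
      have heq : (List.range (blockLen α q)).map (fun t : ℕ => β (q + (t : ZMod N)))
          = (List.range (blockLen α q)).map
            (fun t : ℕ => I.getD t (α (q + (t : ZMod N)))) := by
        apply List.map_congr_left
        intro t ht
        rw [List.mem_range] at ht
        rw [hβ, Rrule_site α hN i hq0 ht, if_pos hk, if_neg hLn, hI, hrdef]
      rw [heq, map_range_getD I (fun t => α (q + (t : ZMod N))) _ (by omega)]
    have hFr : F r = ↑(I.drop (blockLen α q)) := by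
      show Multiset.map β (blockM α r) = _
      rw [map_block]
      have heq : (List.range (blockLen α r)).map (fun t : ℕ => β (r + (t : ZMod N)))
          = (List.range (blockLen α r)).map
            (fun t : ℕ => I.getD (blockLen α q + t) (α (r + (t : ZMod N)))) := by
        apply List.map_congr_left
        intro t ht
        rw [List.mem_range] at ht
        have hLkr : ¬ blockList α r = BiL := hLn
        have hLpr : blockList α (r - 1) = BiL := by
          rw [hr1, hprevList, hk]
        rw [hβ, Rrule_site α hN i hr0 ht, if_neg hLkr, if_pos hLpr, hr1, hprevList,
          blockList_length, hI]
      rw [heq, map_range_getD_add I (fun t => α (r + (t : ZMod N))) _ _ (by omega)]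
      rw [show blockLen α r = (I.drop (blockLen α q)).length by
        rw [List.length_drop, hIlen]; omega, List.take_length]
    have hGq : G q = ↑(blockList α q) := map_block_alpha α hN hq0
    have hGr : G r = ↑(blockList α r) := map_block_alpha α hN hr0
    rw [hFq, hFr, hGq, hGr, Multiset.coe_add, List.take_append_drop, hI,
      interact_multiset _ _ hnod1 hnod2]
  -- transport the sum over R to a sum over A
  have hbij : ∀ (F' : ZMod N → Multiset (Fin n)),
      ∑ r ∈ R, F' r = ∑ q ∈ A, F' (blockEnd α q + 1) := by
    intro F'
    refine (Finset.sum_nbij' (fun q => blockEnd α q + 1) (fun r => blockStart α (r - 1))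
      ?_ ?_ ?_ ?_ ?_).symm
    · -- σ maps A into R
      intro q hqA
      obtain ⟨hqS, hk, hLn⟩ := (hAmem q).mp hqA
      have hq0 : blockStartIdx α q = 0 := (hSmem q).mp hqS
      obtain ⟨hr0, hprevList, hprevStart⟩ := end_facts α hN hq0
      refine (hRmem _).mpr ⟨(hSmem _).mpr hr0, hLn, ?_⟩
      rw [show blockEnd α q + 1 - 1 = blockEnd α q by ring, hprevList]
      exact hk
    · -- τ maps R into A
      intro r hrR
      obtain ⟨hrS, hkr, hpr⟩ := (hRmem r).mp hrR
      have hr0 : blockStartIdx α r = 0 := (hSmem r).mp hrS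
      obtain ⟨hb1, hb2, hb3⟩ := base_facts α hN (r - 1)
      refine (hAmem _).mpr ⟨(hSmem _).mpr hb1, by rw [hb2]; exact hpr, ?_⟩
      rw [hb3, prev_facts α hN hr0, sub_add_cancel]
      exact hkr
    · -- τ ∘ σ = id on A
      intro q hqA
      have hq0 : blockStartIdx α q = 0 := (hSmem q).mp (hsub (Finset.mem_union_left _ hqA))
      obtain ⟨hr0, hprevList, hprevStart⟩ := end_facts α hN hq0
      show blockStart α (blockEnd α q + 1 - 1) = q
      rw [show blockEnd α q + 1 - 1 = blockEnd α q by ring, hprevStart]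
    · -- σ ∘ τ = id on R
      intro r hrR
      have hr0 : blockStartIdx α r = 0 :=
        (hSmem r).mp (hsub (Finset.mem_union_right _ hrR))
      obtain ⟨hb1, hb2, hb3⟩ := base_facts α hN (r - 1)
      show blockEnd α (blockStart α (r - 1)) + 1 = r
      rw [hb3, prev_facts α hN hr0, sub_add_cancel]
    · intro q _
      rfl
  -- assemble
  rw [← Finset.sum_sdiff hsub, ← Finset.sum_sdiff (f := G) hsub,
    Finset.sum_union hdisj, Finset.sum_union (f := G) hdisj,
    Finset.sum_congr rfl hout, hbij F, hbij G, ← Finset.sum_add_distrib,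
    ← Finset.sum_add_distrib, Finset.sum_congr rfl hpair]

private lemma foldr_Rrule_preserves (hN : 0 < N) (l : List ℕ) (α : Config n N) (j : Fin n) :
    countState j (l.foldr (fun i β => Rrule i β) α) = countState j α := by
  induction l generalizing α with
  | nil => rfl
  | cons a l ih =>
    rw [List.foldr_cons, Rrule_preserves _ hN, ih]

private lemma chainRule_preserves (hN : 0 < N) (m : ℕ) (α : Config n N) (j : Fin n) :
    countState j (chainRule m α) = countState j α :=
  foldr_Rrule_preserves hN _ α j

private lemma foldr_chain_preserves (hN : 0 < N) (l : List ℕ) (α : Config n N) (j : Fin n) :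
    countState j (l.foldr (fun m β => chainRule m β) α) = countState j α := by
  induction l generalizing α with
  | nil => rfl
  | cons a l ih =>
    rw [List.foldr_cons, chainRule_preserves hN, ih]

end Aux

/-- Each basic rule `R_i` (`0 ≤ i ≤ 2^n − 2`) preserves all densities,
and consequently so does the affinity rule `A`. -/
theorem basic_and_affinity_rules_preserve_densities
    (n N : ℕ) (hn : 2 ≤ n) (hN : 1 ≤ N) :
    (∀ i : ℕ, i ≤ 2^n - 2 → ∀ (α : Config n N) (j : Fin n),
      countState j (Rrule i α) = countState j α) ∧
    (∀ (α : Config n N) (j : Fin n), countState j (Arule α) = countState j α) := by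
  constructor
  · intro i _ α j
    exact Rrule_preserves α hN i j
  · intro α j
    exact foldr_chain_preserves hN _ α j

end DensityCA
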